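/- Let v1, v2, y be jointly distributed random variables and z1 a random variable satisfying I(y; z1 | v1, v2) = 0 (i.e., z1 is a representation of v1, conditionally independent of y given the views). Then I(v1; y | z1) ≤ I(v1; v2 | z1) + I(v1; y | v2). -/

import Mathlib

open scoped BigOperators

/-- Conditional mutual information I(X;Y|Z) for a finite probability space
given by a pmf `p` on `Ω`. -/
noncomputable def condMI {Ω A B C : Type} [Fintype Ω] [Fintype A] [Fintype B] [Fintype C]
    [DecidableEq A] [DecidableEq B] [DecidableEq C]
    (p : Ω → ℝ) (X : Ω → A) (Y : Ω → B) (Z : Ω → C) : ℝ :=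
  ∑ a : A, ∑ b : B, ∑ c : C,
    (∑ ω : Ω, if X ω = a ∧ Y ω = b ∧ Z ω = c then p ω else 0) *
      Real.log
        ((∑ ω : Ω, if X ω = a ∧ Y ω = b ∧ Z ω = c then p ω else 0) *
            (∑ ω : Ω, if Z ω = c then p ω else 0) /
          ((∑ ω : Ω, if X ω = a ∧ Z ω = c then p ω else 0) *
            (∑ ω : Ω, if Y ω = b ∧ Z ω = c then p ω else 0)))

/-- Mutual information I(X;Y) as conditional mutual information given a constant. -/
noncomputable def mi {Ω A B : Type} [Fintype Ω] [Fintype A] [Fintype B]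
    [DecidableEq A] [DecidableEq B] (p : Ω → ℝ) (X : Ω → A) (Y : Ω → B) : ℝ :=
  condMI p X Y (fun _ => ())

/-!
Write `H(U) = -∑ ω, p ω * log P(U = U ω)`. Splitting the logarithm in the definition gives
`I(X;Y|Z) = H(XZ) + H(YZ) - H(XYZ) - H(Z)`, and `H(U)` only depends on the partition of `Ω` into
level sets of `U`; the chain rule follows. Two chain-rule expansions of `I(v1; y v2 | z1)` give
`I(v1;y|z1) ≤ I(v1;v2|z1) + I(v1;y|v2 z1)`, and two of `I(y; v1 z1 | v2)`, together with
`I(y;z1|v1 v2) = 0`, give `I(y;v1|z1 v2) ≤ I(y;v1|v2)`.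
-/

open Finset Real

lemma sub_le_mul_log_div {x y : ℝ} (hx : 0 ≤ x) (hy : 0 ≤ y) (hxy : 0 < x → 0 < y) :
    x - y ≤ x * log (x / y) := by
  rcases hx.eq_or_lt with rfl | hx
  · simpa using hy
  have hy := hxy hx
  have := one_sub_inv_le_log_of_pos (div_pos hx hy)
  calc x - y = x * (1 - (x / y)⁻¹) := by field_simp
    _ ≤ x * log (x / y) := by gcongr

lemma mul_log_div_mul {q a b c d : ℝ} (h : q ≠ 0 → a ≠ 0 ∧ b ≠ 0 ∧ c ≠ 0 ∧ d ≠ 0) :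
    q * log (a * b / (c * d)) = q * log a + q * log b - q * log c - q * log d := by
  rcases eq_or_ne q 0 with rfl | hq
  · simp
  obtain ⟨ha, hb, hc, hd⟩ := h hq
  rw [log_div (by positivity) (by positivity), log_mul ha hb, log_mul hc hd]
  ring

section
variable {Ω A B C : Type} [Fintype Ω] [Fintype A] [Fintype B] [Fintype C]
  [DecidableEq A] [DecidableEq B] [DecidableEq C] (p : Ω → ℝ)

lemma mass_nonneg (hp : ∀ ω, 0 ≤ p ω) (S : Ω → Prop) [DecidablePred S] :
    0 ≤ ∑ ω, if S ω then p ω else 0 :=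
  sum_nonneg fun ω _ => by split_ifs <;> simp [hp]

lemma mass_mono (hp : ∀ ω, 0 ≤ p ω) {S T : Ω → Prop} [DecidablePred S] [DecidablePred T]
    (h : ∀ ω, S ω → T ω) : (∑ ω, if S ω then p ω else 0) ≤ ∑ ω, if T ω then p ω else 0 :=
  sum_le_sum fun ω _ => by split_ifs <;> simp_all

lemma mass_ne_zero (hp : ∀ ω, 0 ≤ p ω) {S : Ω → Prop} [DecidablePred S] {ω : Ω} (hω : p ω ≠ 0)
    (hS : S ω) : (∑ ω', if S ω' then p ω' else 0) ≠ 0 :=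
  ((hp ω).lt_of_ne' hω |>.trans_le <| by
    simpa [hS] using single_le_sum (f := fun ω' => if S ω' then p ω' else 0)
      (fun ω' _ => by split_ifs <;> simp [hp]) (mem_univ ω)).ne'

lemma sum_mass_eq_and (X : Ω → A) (S : Ω → Prop) [DecidablePred S] :
    ∑ a, (∑ ω, if X ω = a ∧ S ω then p ω else 0) = ∑ ω, if S ω then p ω else 0 := by
  rw [sum_comm]
  exact sum_congr rfl fun ω _ => by simp [ite_and]

lemma sum_joint_mass_mul (X : Ω → A) (Y : Ω → B) (Z : Ω → C) (F : A → B → C → ℝ) :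
    ∑ a, ∑ b, ∑ c, (∑ ω, if X ω = a ∧ Y ω = b ∧ Z ω = c then p ω else 0) * F a b c =
      ∑ ω, p ω * F (X ω) (Y ω) (Z ω) := by
  simp only [sum_mul, ite_mul, zero_mul]
  simp_rw [sum_comm (t := (univ : Finset Ω))]
  simp [ite_and]

noncomputable def entropy {T : Type} [DecidableEq T] (U : Ω → T) : ℝ :=
  -∑ ω, p ω * log (∑ ω', if U ω' = U ω then p ω' else 0)

lemma entropy_congr {T T' : Type} [DecidableEq T] [DecidableEq T'] {U : Ω → T} {V : Ω → T'}
    (h : ∀ ω ω', U ω' = U ω ↔ V ω' = V ω) : entropy p U = entropy p V := by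
  simp only [entropy, fun ω ω' => propext (h ω ω')]

theorem condMI_eq_entropy (hp : ∀ ω, 0 ≤ p ω) (X : Ω → A) (Y : Ω → B) (Z : Ω → C) :
    condMI p X Y Z = entropy p (fun ω => (X ω, Z ω)) + entropy p (fun ω => (Y ω, Z ω))
      - entropy p (fun ω => (X ω, Y ω, Z ω)) - entropy p Z := by
  simp only [condMI, sum_joint_mass_mul]
  refine (sum_congr rfl fun ω _ => mul_log_div_mul fun h => ?_).trans ?_
  · exact ⟨mass_ne_zero p hp h ⟨rfl, rfl, rfl⟩, mass_ne_zero p hp h rfl,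
      mass_ne_zero p hp h ⟨rfl, rfl⟩, mass_ne_zero p hp h ⟨rfl, rfl⟩⟩
  simp only [entropy, Prod.mk.injEq, sum_add_distrib, sum_sub_distrib]
  ring

theorem condMI_congr (hp : ∀ ω, 0 ≤ p ω) {A' B' C' : Type} [Fintype A'] [Fintype B'] [Fintype C']
    [DecidableEq A'] [DecidableEq B'] [DecidableEq C'] {X : Ω → A} {Y : Ω → B} {Z : Ω → C}
    {X' : Ω → A'} {Y' : Ω → B'} {Z' : Ω → C'} (hX : ∀ ω ω', X ω' = X ω ↔ X' ω' = X' ω)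
    (hY : ∀ ω ω', Y ω' = Y ω ↔ Y' ω' = Y' ω) (hZ : ∀ ω ω', Z ω' = Z ω ↔ Z' ω' = Z' ω) :
    condMI p X Y Z = condMI p X' Y' Z' := by
  rw [condMI_eq_entropy p hp, condMI_eq_entropy p hp]
  refine congr_arg₂ _ (congr_arg₂ _ (congr_arg₂ _ ?_ ?_) ?_) (entropy_congr p hZ) <;>
    exact entropy_congr p fun ω ω' => by simp only [Prod.mk.injEq, hX, hY, hZ]

theorem condMI_comm (hp : ∀ ω, 0 ≤ p ω) (X : Ω → A) (Y : Ω → B) (Z : Ω → C) :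
    condMI p X Y Z = condMI p Y X Z := by
  rw [condMI_eq_entropy p hp, condMI_eq_entropy p hp,
    entropy_congr p (U := fun ω => (X ω, Y ω, Z ω)) (V := fun ω => (Y ω, X ω, Z ω))
      fun ω ω' => by simp only [Prod.mk.injEq]; tauto]
  ring

theorem condMI_prod_eq_add {D : Type} [Fintype D] [DecidableEq D] (hp : ∀ ω, 0 ≤ p ω)
    (X : Ω → A) (Y : Ω → B) (Z : Ω → C) (W : Ω → D) :
    condMI p X (fun ω => (Y ω, Z ω)) W
      = condMI p X Y W + condMI p X Z (fun ω => (Y ω, W ω)) := by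
  have hYZW : entropy p (fun ω => ((Y ω, Z ω), W ω)) = entropy p (fun ω => (Z ω, Y ω, W ω)) :=
    entropy_congr p fun ω ω' => by simp only [Prod.mk.injEq]; tauto
  have hXYZW : entropy p (fun ω => (X ω, (Y ω, Z ω), W ω))
      = entropy p (fun ω => (X ω, Z ω, Y ω, W ω)) :=
    entropy_congr p fun ω ω' => by simp only [Prod.mk.injEq]; tauto
  simp only [condMI_eq_entropy p hp]
  rw [hYZW, hXYZW]
  ring

theorem condMI_nonneg (hp : ∀ ω, 0 ≤ p ω) (X : Ω → A) (Y : Ω → B) (Z : Ω → C) :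
    0 ≤ condMI p X Y Z := by
  set Pxyz := fun a b c => ∑ ω, if X ω = a ∧ Y ω = b ∧ Z ω = c then p ω else 0
  set Pxz := fun a c => ∑ ω, if X ω = a ∧ Z ω = c then p ω else 0
  set Pyz := fun b c => ∑ ω, if Y ω = b ∧ Z ω = c then p ω else 0
  set Pz := fun c => ∑ ω, if Z ω = c then p ω else 0
  have hxyz a c : ∑ b, Pxyz a b c = Pxz a c := by
    rw [sum_comm]
    exact sum_congr rfl fun ω _ => by simp [ite_and]
  have hxz c : ∑ a, Pxz a c = Pz c := sum_mass_eq_and p X _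
  have hyz c : ∑ b, Pyz b c = Pz c := sum_mass_eq_and p Y _
  have hgibbs a b c : Pxyz a b c - Pxz a c * Pyz b c / Pz c ≤
      Pxyz a b c * log (Pxyz a b c * Pz c / (Pxz a c * Pyz b c)) := by
    rw [← div_div_eq_mul_div (Pxyz a b c)]
    have h0 {S : Ω → Prop} [DecidablePred S] := mass_nonneg p hp S
    refine sub_le_mul_log_div h0 (div_nonneg (mul_nonneg h0 h0) h0) fun h => ?_
    have hxz : 0 < Pxz a c := h.trans_le (mass_mono p hp fun _ hω => ⟨hω.1, hω.2.2⟩)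
    have hyz : 0 < Pyz b c := h.trans_le (mass_mono p hp fun _ hω => hω.2)
    have hz : 0 < Pz c := h.trans_le (mass_mono p hp fun _ hω => hω.2.2)
    exact div_pos (mul_pos hxz hyz) hz
  -- `Pz * Pz / Pz = Pz` also when `Pz = 0`
  calc (0 : ℝ) = ∑ c, (Pz c - Pz c * Pz c / Pz c) := by simp [mul_self_div_self]
    _ = ∑ c, ∑ a, ∑ b, (Pxyz a b c - Pxz a c * Pyz b c / Pz c) := by
      refine sum_congr rfl fun c _ => ?_
      simp only [sum_sub_distrib, ← sum_div, ← mul_sum, ← sum_mul, hxyz, hxz, hyz]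
    _ = ∑ a, ∑ b, ∑ c, (Pxyz a b c - Pxz a c * Pyz b c / Pz c) := by
      rw [sum_comm]
      exact sum_congr rfl fun a _ => sum_comm
    _ ≤ condMI p X Y Z := sum_le_sum fun a _ => sum_le_sum fun b _ => sum_le_sum fun c _ =>
      hgibbs a b c

theorem condMI_le_condMI_add_condMI_prod {D : Type} [Fintype D] [DecidableEq D]
    (hp : ∀ ω, 0 ≤ p ω) (X : Ω → A) (Y : Ω → B) (Z : Ω → C) (W : Ω → D) :
    condMI p X Y W ≤ condMI p X Z W + condMI p X Y (fun ω => (Z ω, W ω)) := by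
  have hYZ := condMI_prod_eq_add p hp X Y Z W
  have hZY := condMI_prod_eq_add p hp X Z Y W
  have hswap : condMI p X (fun ω => (Y ω, Z ω)) W = condMI p X (fun ω => (Z ω, Y ω)) W :=
    condMI_congr p hp (fun _ _ => Iff.rfl) (fun _ _ => by simp only [Prod.mk.injEq, and_comm])
      (fun _ _ => Iff.rfl)
  linarith [condMI_nonneg p hp X Z (fun ω => (Y ω, W ω))]

theorem condMI_prod_le_of_condMI_eq_zero {D : Type} [Fintype D] [DecidableEq D]
    (hp : ∀ ω, 0 ≤ p ω) (X : Ω → A) (Y : Ω → B) (Z : Ω → C) (W : Ω → D)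
    (h : condMI p Y Z (fun ω => (X ω, W ω)) = 0) :
    condMI p Y X (fun ω => (Z ω, W ω)) ≤ condMI p Y X W := by
  have hXZ := condMI_prod_eq_add p hp Y X Z W
  have hZX := condMI_prod_eq_add p hp Y Z X W
  have hswap : condMI p Y (fun ω => (X ω, Z ω)) W = condMI p Y (fun ω => (Z ω, X ω)) W :=
    condMI_congr p hp (fun _ _ => Iff.rfl) (fun _ _ => by simp only [Prod.mk.injEq, and_comm])
      (fun _ _ => Iff.rfl)
  linarith [condMI_nonneg p hp Y Z W]

end

theorem stmt0_general {Ω A B C D : Type} [Fintype Ω] [Fintype A] [Fintype B] [Fintype C] [Fintype D]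
    [DecidableEq A] [DecidableEq B] [DecidableEq C] [DecidableEq D]
    (p : Ω → ℝ) (hp : ∀ ω, 0 ≤ p ω)
    (v1 : Ω → A) (v2 : Ω → B) (y : Ω → C) (z1 : Ω → D)
    (hrep : condMI p y z1 (fun ω => (v1 ω, v2 ω)) = 0) :
    condMI p v1 y z1 ≤ condMI p v1 v2 z1 + condMI p v1 y v2 := by
  have hsplit := condMI_le_condMI_add_condMI_prod p hp v1 y v2 z1
  have hdrop := condMI_prod_le_of_condMI_eq_zero p hp v1 y z1 v2 hrep
  have hreorder :
      condMI p v1 y (fun ω => (v2 ω, z1 ω)) = condMI p y v1 (fun ω => (z1 ω, v2 ω)) := by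
    rw [condMI_comm p hp]
    exact condMI_congr p hp (fun _ _ => Iff.rfl) (fun _ _ => Iff.rfl)
      (fun _ _ => by simp only [Prod.mk.injEq, and_comm])
  linarith [condMI_comm p hp y v1 v2]

theorem stmt0 {Ω A B C D : Type} [Fintype Ω] [Fintype A] [Fintype B] [Fintype C] [Fintype D]
    [DecidableEq A] [DecidableEq B] [DecidableEq C] [DecidableEq D]
    (p : Ω → ℝ) (hp : ∀ ω, 0 ≤ p ω) (hp1 : ∑ ω : Ω, p ω = 1)
    (v1 : Ω → A) (v2 : Ω → B) (y : Ω → C) (z1 : Ω → D)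
    (hrep : condMI p y z1 (fun ω => (v1 ω, v2 ω)) = 0) :
    condMI p v1 y z1 ≤ condMI p v1 v2 z1 + condMI p v1 y v2 :=
  stmt0_general p hp v1 v2 y z1 hrep
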